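/- Let b : ℝⁿ → ℝⁿ be Lipschitz with constant K, let 0 be an asymptotically stable equilibrium of x' = b(x) with b(0) = 0, and let x ≠ 0 be a point on the boundary of a domain D attracted to 0 with ⟨b(y), n(y)⟩ < 0 on ∂D. Assume the minimal action path φ*_{0,x} attaining V(0,x) exists with finite length, and that for every point y on φ*_{0,x} the sub-path φ*_{y,x} is a minimizer from y to x with finite optimal time T*_{y,x}. For each n ∈ ℕ let φ̄^{*,n}_{0,x} attain the constrained infimum Ŝ(φ̄^{*,n}_{0,x}) = inf{ Ŝ(φ̄) : φ̄ ∈ A₁, T̂(φ̄) ≤ n }. Then the sequence n ↦ Ŝ(φ̄^{*,n}_{0,x}) is nonincreasing, satisfies for suitable points y_k on φ*_{0,x} with |y_k| = ρ_k = 2^{-k}ρ and n = ⌈T*_{y_k,x} + 1⌉ the bound Ŝ(φ̄^{*,n}_{0,x}) ≤ S_{T*_{0,x}}(φ*_{0,x}) + C(K) ρ_k², and hence {φ̄^{*,n}_{0,x}} is a minimizing sequence: lim_{n→∞} Ŝ(φ̄^{*,n}_{0,x}) = inf_{φ̄∈A₁} Ŝ(φ̄) = V(0,x). -/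

import Mathlib

open MeasureTheory Filter intervalIntegral
open scoped RealInnerProductSpace Topology

noncomputable section

/-- `φ` is an `H¹` path on `[0,T]` with (weak) derivative `dφ`:
`dφ` is square integrable on `(0,T)` and `φ` is the primitive of `dφ`. -/
def IsH1Path {n : ℕ} (T : ℝ) (φ dφ : ℝ → EuclideanSpace ℝ (Fin n)) : Prop :=
  MeasureTheory.MemLp dφ 2 (MeasureTheory.volume.restrict (Set.Ioc (0:ℝ) T)) ∧
  ∀ t ∈ Set.Icc (0:ℝ) T, φ t = φ 0 + ∫ s in (0:ℝ)..t, dφ s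

/-- The Freidlin–Wentzell action functional `S_T(φ) = (1/2)∫₀ᵀ ‖φ' - b(φ)‖² dt`. -/
def action {n : ℕ} (b : EuclideanSpace ℝ (Fin n) → EuclideanSpace ℝ (Fin n))
    (T : ℝ) (φ dφ : ℝ → EuclideanSpace ℝ (Fin n)) : ℝ :=
  (1/2) * ∫ t in (0:ℝ)..T, ‖dφ t - b (φ t)‖^2

/-- The `L²(0,T)` norm of an `ℝⁿ`-valued function. -/
def L2norm {n : ℕ} (T : ℝ) (f : ℝ → EuclideanSpace ℝ (Fin n)) : ℝ :=
  Real.sqrt (∫ t in (0:ℝ)..T, ‖f t‖^2)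

/-- The admissible set `A_T` of `H¹` transition paths from `x₁` to `x₂` on `[0,T]`. -/
def Adm {n : ℕ} (T : ℝ) (x₁ x₂ : EuclideanSpace ℝ (Fin n))
    (φ dφ : ℝ → EuclideanSpace ℝ (Fin n)) : Prop :=
  IsH1Path T φ dφ ∧ φ 0 = x₁ ∧ φ T = x₂

/-- The rescaled action `S(T, φ̄) = (T/2)∫₀¹ ‖T⁻¹ φ̄' - b(φ̄)‖² ds` on `[0,1]`. -/
def Ssc {n : ℕ} (b : EuclideanSpace ℝ (Fin n) → EuclideanSpace ℝ (Fin n))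
    (T : ℝ) (φ dφ : ℝ → EuclideanSpace ℝ (Fin n)) : ℝ :=
  (T/2) * ∫ s in (0:ℝ)..1, ‖T⁻¹ • dφ s - b (φ s)‖^2

/-- The optimal linear time scaling `T̂(φ̄) = ‖φ̄'‖_{L²} / ‖b(φ̄)‖_{L²}`. -/
def That {n : ℕ} (b : EuclideanSpace ℝ (Fin n) → EuclideanSpace ℝ (Fin n))
    (φ dφ : ℝ → EuclideanSpace ℝ (Fin n)) : ℝ :=
  L2norm 1 dφ / L2norm 1 (fun s => b (φ s))

/-- The reformulated action `Ŝ(φ̄) = ‖φ̄'‖_{L²} ‖b(φ̄)‖_{L²} − ∫₀¹⟨φ̄', b(φ̄)⟩ ds`. -/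
def Shat {n : ℕ} (b : EuclideanSpace ℝ (Fin n) → EuclideanSpace ℝ (Fin n))
    (φ dφ : ℝ → EuclideanSpace ℝ (Fin n)) : ℝ :=
  L2norm 1 dφ * L2norm 1 (fun s => b (φ s)) - ∫ s in (0:ℝ)..1, ⟪dφ s, b (φ s)⟫

/-- `a` and `c` are adjacent nodes of the partition (finite node set) `P`. -/
def Adjacent (P : Finset ℝ) (a c : ℝ) : Prop :=
  a ∈ P ∧ c ∈ P ∧ a < c ∧ ∀ p ∈ P, p ≤ a ∨ c ≤ p

/-- `φ` is affine on each element of the partition `P`. -/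
def PiecewiseAffineOn {n : ℕ} (P : Finset ℝ) (φ : ℝ → EuclideanSpace ℝ (Fin n)) : Prop :=
  ∀ a c, Adjacent P a c → ∀ t ∈ Set.Icc a c,
    φ t = φ a + ((t - a) / (c - a)) • (φ c - φ a)

/-- `P` is a partition (node set) of `[0,T]`. -/
def IsPartition (T : ℝ) (P : Finset ℝ) : Prop :=
  (0:ℝ) ∈ P ∧ T ∈ P ∧ ∀ p ∈ P, p ∈ Set.Icc (0:ℝ) T

/-- Weak convergence `φ_k ⇀ φ` in `H¹((0,T); ℝⁿ)`, expressed by testing the pair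
`(φ_k, φ_k')` against arbitrary pairs of `L²` functions. -/
def WeakH1Tendsto {n : ℕ} (T : ℝ) (φk dφk : ℕ → ℝ → EuclideanSpace ℝ (Fin n))
    (φ dφ : ℝ → EuclideanSpace ℝ (Fin n)) : Prop :=
  ∀ g₀ g₁ : ℝ → EuclideanSpace ℝ (Fin n),
    MeasureTheory.MemLp g₀ 2 (MeasureTheory.volume.restrict (Set.Ioc (0:ℝ) T)) →
    MeasureTheory.MemLp g₁ 2 (MeasureTheory.volume.restrict (Set.Ioc (0:ℝ) T)) →
    Tendsto (fun k => (∫ t in (0:ℝ)..T, ⟪φk k t, g₀ t⟫) + ∫ t in (0:ℝ)..T, ⟪dφk k t, g₁ t⟫)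
      atTop (𝓝 ((∫ t in (0:ℝ)..T, ⟪φ t, g₀ t⟫) + ∫ t in (0:ℝ)..T, ⟪dφ t, g₁ t⟫))

/-- Values of `S_T` over the admissible set `A_T` (Problem I). -/
def probISet {n : ℕ} (b : EuclideanSpace ℝ (Fin n) → EuclideanSpace ℝ (Fin n))
    (T : ℝ) (x₁ x₂ : EuclideanSpace ℝ (Fin n)) : Set ℝ :=
  {v | ∃ φ dφ, Adm T x₁ x₂ φ dφ ∧ v = action b T φ dφ}

/-- Values of `S_T` over all `T > 0` and `φ ∈ A_T` (Problem II); its infimum is the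
quasi-potential `V(x₁,x₂)`. -/
def probIISet {n : ℕ} (b : EuclideanSpace ℝ (Fin n) → EuclideanSpace ℝ (Fin n))
    (x₁ x₂ : EuclideanSpace ℝ (Fin n)) : Set ℝ :=
  {v | ∃ T, 0 < T ∧ ∃ φ dφ, Adm T x₁ x₂ φ dφ ∧ v = action b T φ dφ}

/-- Values of `Ŝ` over the rescaled admissible set `A₁`. -/
def shatSet {n : ℕ} (b : EuclideanSpace ℝ (Fin n) → EuclideanSpace ℝ (Fin n))
    (x₁ x₂ : EuclideanSpace ℝ (Fin n)) : Set ℝ :=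
  {v | ∃ φ dφ, Adm 1 x₁ x₂ φ dφ ∧ v = Shat b φ dφ}

/-- Membership in the finite element space `B_h` of continuous piecewise affine
admissible paths associated with the partition `P`. -/
def BmemP {n : ℕ} (P : Finset ℝ) (T : ℝ) (x₁ x₂ : EuclideanSpace ℝ (Fin n))
    (φ dφ : ℝ → EuclideanSpace ℝ (Fin n)) : Prop :=
  Adm T x₁ x₂ φ dφ ∧ PiecewiseAffineOn P φ

/-- Values of `S_T` over the finite element space `B_h` (the discretized Problem I). -/
def discSet {n : ℕ} (b : EuclideanSpace ℝ (Fin n) → EuclideanSpace ℝ (Fin n))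
    (P : Finset ℝ) (T : ℝ) (x₁ x₂ : EuclideanSpace ℝ (Fin n)) : Set ℝ :=
  {v | ∃ φ dφ, BmemP P T x₁ x₂ φ dφ ∧ v = action b T φ dφ}

/-- Values of `Ŝ` over the finite element space `B̄_h` (the discretized Problem II). -/
def discShatSet {n : ℕ} (b : EuclideanSpace ℝ (Fin n) → EuclideanSpace ℝ (Fin n))
    (P : Finset ℝ) (x₁ x₂ : EuclideanSpace ℝ (Fin n)) : Set ℝ :=
  {v | ∃ φ dφ, BmemP P 1 x₁ x₂ φ dφ ∧ v = Shat b φ dφ}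


/-!
Rescaling time to `[0,1]` turns `S_T(φ)` into
`S(T, φ̄) = Ŝ(φ̄) + (‖φ̄'‖_{L²} - T ‖b(φ̄)‖_{L²})² / (2T)`, so `Ŝ(φ̄)` is the infimum of the
rescaled action over `T > 0` and `inf_{A₁} Ŝ = V(0,x)`. The constrained minima decrease as the
time bound grows and stay above `V(0,x)`. To push them down to `V(0,x)`, run along the segment
from `0` to a point `y` of the minimal action path with `|y| ≤ ρ_k` in unit time, at a cost of at
most `C(K)|y|²`, and then along the optimal sub-path from `y` to `x`. Rescaled to `[0,1]`, this
path has `Ŝ ≤ V(0,x) + C(K)ρ_k²` and a finite `T̂`, so it competes in every constrained problem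
with a large enough time bound.
-/

open Set

section L2

variable {E : Type*} [NormedAddCommGroup E] [InnerProductSpace ℝ E] {μ : Measure ℝ}
  {f g : ℝ → E}

lemma MeasureTheory.MemLp.integrable_inner (hf : MemLp f 2 μ) (hg : MemLp g 2 μ) :
    Integrable (fun t => ⟪f t, g t⟫) μ := by
  rw [← memLp_one_iff_integrable]
  refine hf.of_bilin (fun u v => ⟪u, v⟫) 1 hg (hf.1.inner hg.1) (.of_forall fun t => ?_)
  simpa using nnnorm_inner_le_nnnorm (𝕜 := ℝ) (f t) (g t)

lemma integral_norm_smul_sub_sq (c : ℝ) (hf : MemLp f 2 μ) (hg : MemLp g 2 μ) :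
    ∫ t, ‖c • f t - g t‖ ^ 2 ∂μ
      = c ^ 2 * (∫ t, ‖f t‖ ^ 2 ∂μ) - 2 * c * (∫ t, ⟪f t, g t⟫ ∂μ) + ∫ t, ‖g t‖ ^ 2 ∂μ := by
  have hf2 := (memLp_two_iff_integrable_sq_norm hf.1).mp hf
  have hg2 := (memLp_two_iff_integrable_sq_norm hg.1).mp hg
  have hfg := (hf.integrable_inner hg).const_mul (2 * c)
  have hpt : ∀ t, ‖c • f t - g t‖ ^ 2 = c ^ 2 * ‖f t‖ ^ 2 - 2 * c * ⟪f t, g t⟫ + ‖g t‖ ^ 2 := by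
    intro t
    rw [norm_sub_sq_real, real_inner_smul_left, norm_smul, mul_pow, Real.norm_eq_abs, sq_abs]
    ring
  have hA : Integrable (fun t => c ^ 2 * ‖f t‖ ^ 2 - 2 * c * ⟪f t, g t⟫) μ :=
    (hf2.const_mul _).sub hfg
  simp_rw [hpt]
  rw [integral_add hA hg2, integral_sub (hf2.const_mul _) hfg,
    MeasureTheory.integral_const_mul, MeasureTheory.integral_const_mul]

lemma memLp_two_Ioc_iff {F : Type*} [NormedAddCommGroup F] {f : ℝ → F} {T : ℝ} (hT : 0 ≤ T) :
    MemLp f 2 (volume.restrict (Ioc 0 T)) ↔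
      IntervalIntegrable f volume 0 T ∧ IntervalIntegrable (fun t => ‖f t‖ ^ 2) volume 0 T := by
  simp only [intervalIntegrable_iff_integrableOn_Ioc_of_le hT]
  exact ⟨fun h => ⟨h.integrable one_le_two, (memLp_two_iff_integrable_sq_norm h.1).mp h⟩,
    fun h => (memLp_two_iff_integrable_sq_norm h.1.1).mpr h.2⟩

end L2

section Append

variable {F : Type*} [NormedAddCommGroup F] {f g : ℝ → F} {S t : ℝ}

def pathAppend {α : Type*} (S : ℝ) (f g : ℝ → α) (t : ℝ) : α :=
  if t ≤ S then f t else g (t - S)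

lemma pathAppend_of_le {α : Type*} {f g : ℝ → α} (ht : t ≤ S) : pathAppend S f g t = f t :=
  if_pos ht

lemma pathAppend_of_lt {α : Type*} {f g : ℝ → α} (ht : S < t) :
    pathAppend S f g t = g (t - S) :=
  if_neg ht.not_ge

lemma intervalIntegrable_pathAppend_left (hS : 0 ≤ S) (hf : IntervalIntegrable f volume 0 S) :
    IntervalIntegrable (pathAppend S f g) volume 0 S :=
  (intervalIntegrable_congr fun s hs =>
    (pathAppend_of_le (by rw [uIoc_of_le hS] at hs; exact hs.2)).symm).1 hf

lemma intervalIntegrable_pathAppend_right (hSt : S ≤ t)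
    (hg : IntervalIntegrable g volume 0 (t - S)) :
    IntervalIntegrable (pathAppend S f g) volume S t := by
  have hshift := hg.comp_sub_right S
  rw [zero_add, sub_add_cancel] at hshift
  exact (intervalIntegrable_congr fun s hs =>
    (pathAppend_of_lt (by rw [uIoc_of_le hSt] at hs; exact hs.1)).symm).1 hshift

lemma IntervalIntegrable.pathAppend (hS : 0 ≤ S) (hSt : S ≤ t)
    (hf : IntervalIntegrable f volume 0 S) (hg : IntervalIntegrable g volume 0 (t - S)) :
    IntervalIntegrable (pathAppend S f g) volume 0 t :=
  (intervalIntegrable_pathAppend_left hS hf).trans (intervalIntegrable_pathAppend_right hSt hg)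

variable [NormedSpace ℝ F]

lemma integral_pathAppend_of_le (hS : 0 ≤ S) (ht : t ≤ S) :
    ∫ s in (0:ℝ)..t, pathAppend S f g s = ∫ s in (0:ℝ)..t, f s :=
  intervalIntegral.integral_congr fun _ hs => pathAppend_of_le (hs.2.trans (max_le hS ht))

lemma integral_pathAppend (hS : 0 ≤ S) (hSt : S ≤ t)
    (hf : IntervalIntegrable f volume 0 S) (hg : IntervalIntegrable g volume 0 (t - S)) :
    ∫ s in (0:ℝ)..t, pathAppend S f g s = (∫ s in (0:ℝ)..S, f s) + ∫ s in (0:ℝ)..(t - S), g s := by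
  rw [← intervalIntegral.integral_add_adjacent_intervals (intervalIntegrable_pathAppend_left hS hf)
    (intervalIntegrable_pathAppend_right hSt hg), integral_pathAppend_of_le hS le_rfl,
    intervalIntegral.integral_congr_ae (g := fun s => g (s - S)) (.of_forall fun s hs =>
      pathAppend_of_lt (by rw [uIoc_of_le hSt] at hs; exact hs.1)),
    intervalIntegral.integral_comp_sub_right, sub_self]

end Append

section Paths

variable {n : ℕ} {b : EuclideanSpace ℝ (Fin n) → EuclideanSpace ℝ (Fin n)}
  {x₁ x₂ y : EuclideanSpace ℝ (Fin n)} {φ dφ φ₁ dφ₁ φ₂ dφ₂ : ℝ → EuclideanSpace ℝ (Fin n)}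
  {S T : ℝ}

lemma IsH1Path.intervalIntegrable (hT : 0 ≤ T) (h : IsH1Path T φ dφ) :
    IntervalIntegrable dφ volume 0 T :=
  ((memLp_two_Ioc_iff hT).1 h.1).1

lemma IsH1Path.continuousOn (hT : 0 ≤ T) (h : IsH1Path T φ dφ) : ContinuousOn φ (Icc 0 T) := by
  have hprim := intervalIntegral.continuousOn_primitive_interval' (h.intervalIntegrable hT)
    (a := 0) (by rw [uIcc_of_le hT]; exact left_mem_Icc.2 hT)
  rw [uIcc_of_le hT] at hprim
  exact (continuousOn_const.add hprim).congr h.2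

lemma IsH1Path.memLp_comp (hb : Continuous b) (hT : 0 ≤ T) (h : IsH1Path T φ dφ) :
    MemLp (fun t => b (φ t)) 2 (volume.restrict (Ioc 0 T)) := by
  have hc := hb.comp_continuousOn (h.continuousOn hT)
  obtain ⟨C, hC⟩ := isCompact_Icc.exists_bound_of_continuousOn hc
  refine .of_bound ((hc.mono Ioc_subset_Icc_self).aestronglyMeasurable measurableSet_Ioc) C ?_
  filter_upwards [ae_restrict_mem measurableSet_Ioc] with t ht
  exact hC t (Ioc_subset_Icc_self ht)

lemma IsH1Path.intervalIntegrable_action (hb : Continuous b) (hT : 0 ≤ T)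
    (h : IsH1Path T φ dφ) :
    IntervalIntegrable (fun t => ‖dφ t - b (φ t)‖ ^ 2) volume 0 T :=
  ((memLp_two_Ioc_iff hT).1 (h.1.sub (h.memLp_comp hb hT))).2

lemma IsH1Path.comp_mul {c : ℝ} (hc : 0 < c) (hT : 0 ≤ T) (h : IsH1Path (c * T) φ dφ) :
    IsH1Path T (fun s => φ (c * s)) (fun s => c • dφ (c * s)) := by
  obtain ⟨hd, hsq⟩ := (memLp_two_Ioc_iff (mul_nonneg hc.le hT)).1 h.1
  have hd' : IntervalIntegrable (fun s => c • dφ (c * s)) volume (0 / c) (c * T / c) :=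
    (IntervalIntegrable.comp_mul_left hd (c := c)).smul c
  have hsq' : IntervalIntegrable (fun s => c ^ 2 * ‖dφ (c * s)‖ ^ 2) volume (0 / c) (c * T / c) :=
    (IntervalIntegrable.comp_mul_left hsq (c := c)).const_mul (c ^ 2)
  rw [zero_div, mul_div_cancel_left₀ _ hc.ne'] at hd' hsq'
  refine ⟨(memLp_two_Ioc_iff hT).2 ⟨hd', ?_⟩, fun t ht => ?_⟩
  · simpa [norm_smul, mul_pow, abs_of_pos hc] using hsq'
  · have hct : c * t ∈ Icc 0 (c * T) :=
      ⟨mul_nonneg hc.le ht.1, mul_le_mul_of_nonneg_left ht.2 hc.le⟩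
    simp only [mul_zero, intervalIntegral.integral_smul,
      intervalIntegral.smul_integral_comp_mul_left]
    exact h.2 _ hct

lemma Adm.comp_mul {c : ℝ} (hc : 0 < c) (hT : 0 ≤ T) (h : Adm (c * T) x₁ x₂ φ dφ) :
    Adm T x₁ x₂ (fun s => φ (c * s)) (fun s => c • dφ (c * s)) :=
  ⟨h.1.comp_mul hc hT, by simpa using h.2.1, h.2.2⟩

lemma ssc_comp_mul (hT : T ≠ 0) :
    Ssc b T (fun s => φ (T * s)) (fun s => T • dφ (T * s)) = action b T φ dφ := by
  simp only [Ssc, action, inv_smul_smul₀ hT]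
  rw [intervalIntegral.integral_comp_mul_left (fun u => ‖dφ u - b (φ u)‖ ^ 2) hT, smul_eq_mul,
    mul_zero, mul_one]
  field_simp

lemma action_comp_inv_mul (hT : T ≠ 0) :
    action b T (fun t => φ (T⁻¹ * t)) (fun t => T⁻¹ • dφ (T⁻¹ * t)) = Ssc b T φ dφ := by
  simp only [Ssc, action]
  rw [intervalIntegral.integral_comp_mul_left (fun u => ‖T⁻¹ • dφ u - b (φ u)‖ ^ 2)
    (inv_ne_zero hT), smul_eq_mul, inv_inv, mul_zero, inv_mul_cancel₀ hT]
  ring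

lemma IsH1Path.append (hS : 0 ≤ S) (hT : 0 ≤ T) (h₁ : IsH1Path S φ₁ dφ₁)
    (h₂ : IsH1Path T φ₂ dφ₂) (hjoin : φ₂ 0 = φ₁ S) :
    IsH1Path (S + T) (pathAppend S φ₁ φ₂) (pathAppend S dφ₁ dφ₂) := by
  obtain ⟨hd₁, hsq₁⟩ := (memLp_two_Ioc_iff hS).1 h₁.1
  obtain ⟨hd₂, hsq₂⟩ := (memLp_two_Ioc_iff hT).1 h₂.1
  have hST : S ≤ S + T := le_add_of_nonneg_right hT
  have hsq : (fun t => ‖pathAppend S dφ₁ dφ₂ t‖ ^ 2)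
      = pathAppend S (fun t => ‖dφ₁ t‖ ^ 2) (fun t => ‖dφ₂ t‖ ^ 2) := by
    funext t; unfold pathAppend; split_ifs <;> rfl
  refine ⟨(memLp_two_Ioc_iff (hS.trans hST)).2 ⟨?_, ?_⟩, fun t ht => ?_⟩
  · exact hd₁.pathAppend hS hST (by rwa [add_sub_cancel_left])
  · exact hsq ▸ hsq₁.pathAppend hS hST (by rwa [add_sub_cancel_left])
  have h0 : pathAppend S φ₁ φ₂ 0 = φ₁ 0 := pathAppend_of_le hS
  rcases le_or_gt t S with htS | htS
  · rw [pathAppend_of_le htS, integral_pathAppend_of_le hS htS, h0]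
    exact h₁.2 t ⟨ht.1, htS⟩
  · have htS' : t - S ∈ Icc 0 T := ⟨by linarith, by linarith [ht.2]⟩
    rw [pathAppend_of_lt htS, integral_pathAppend hS htS.le hd₁
      (hd₂.mono_set (uIcc_subset_uIcc_left (by rwa [uIcc_of_le hT]))),
      h0, h₂.2 _ htS', hjoin, h₁.2 S ⟨hS, le_rfl⟩, add_assoc]

lemma Adm.append (hS : 0 ≤ S) (hT : 0 < T) (h₁ : Adm S x₁ y φ₁ dφ₁) (h₂ : Adm T y x₂ φ₂ dφ₂) :
    Adm (S + T) x₁ x₂ (pathAppend S φ₁ φ₂) (pathAppend S dφ₁ dφ₂) :=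
  ⟨h₁.1.append hS hT.le h₂.1 (h₂.2.1.trans h₁.2.2.symm), (pathAppend_of_le hS).trans h₁.2.1,
    (pathAppend_of_lt (by linarith)).trans (by rw [add_sub_cancel_left]; exact h₂.2.2)⟩

lemma action_append (hb : Continuous b) (hS : 0 ≤ S) (hT : 0 ≤ T) (h₁ : IsH1Path S φ₁ dφ₁)
    (h₂ : IsH1Path T φ₂ dφ₂) :
    action b (S + T) (pathAppend S φ₁ φ₂) (pathAppend S dφ₁ dφ₂)
      = action b S φ₁ dφ₁ + action b T φ₂ dφ₂ := by
  have hsplit : (fun t => ‖pathAppend S dφ₁ dφ₂ t - b (pathAppend S φ₁ φ₂ t)‖ ^ 2)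
      = pathAppend S (fun t => ‖dφ₁ t - b (φ₁ t)‖ ^ 2) (fun t => ‖dφ₂ t - b (φ₂ t)‖ ^ 2) := by
    funext t; unfold pathAppend; split_ifs <;> rfl
  simp only [action]
  rw [hsplit, integral_pathAppend hS (le_add_of_nonneg_right hT)
    (h₁.intervalIntegrable_action hb hS)
    (by rw [add_sub_cancel_left]; exact h₂.intervalIntegrable_action hb hT),
    add_sub_cancel_left, mul_add]

lemma adm_linear (y : EuclideanSpace ℝ (Fin n)) : Adm 1 0 y (fun t => t • y) (fun _ => y) :=
  ⟨⟨memLp_const y, fun t _ => by simp⟩, by simp, by simp⟩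

lemma action_linear_le {K : NNReal} (hb : LipschitzWith K b) (hb0 : b 0 = 0)
    (y : EuclideanSpace ℝ (Fin n)) :
    action b 1 (fun t => t • y) (fun _ => y) ≤ (1 + (K:ℝ) ^ 2 / 3) * ‖y‖ ^ 2 := by
  have hpt : ∀ t ∈ Icc (0:ℝ) 1,
      ‖y - b (t • y)‖ ^ 2 ≤ 2 * ‖y‖ ^ 2 + 2 * (K:ℝ) ^ 2 * ‖y‖ ^ 2 * t ^ 2 := by
    intro t ht
    have hbt : ‖b (t • y)‖ ≤ K * (t * ‖y‖) := by
      simpa [hb0, norm_smul, abs_of_nonneg ht.1] using hb.norm_sub_le (t • y) 0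
    -- `(a + b)² ≤ 2a² + 2b²` and `∫₀¹ t² = 1/3` are what produce `C(K) = 1 + K²/3`
    calc ‖y - b (t • y)‖ ^ 2 ≤ (‖y‖ + ‖b (t • y)‖) ^ 2 :=
          pow_le_pow_left₀ (norm_nonneg _) (norm_sub_le _ _) 2
      _ ≤ 2 * ‖y‖ ^ 2 + 2 * ‖b (t • y)‖ ^ 2 := by nlinarith [sq_nonneg (‖y‖ - ‖b (t • y)‖)]
      _ ≤ 2 * ‖y‖ ^ 2 + 2 * (K * (t * ‖y‖)) ^ 2 := by gcongr
      _ = 2 * ‖y‖ ^ 2 + 2 * (K:ℝ) ^ 2 * ‖y‖ ^ 2 * t ^ 2 := by ring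
  have hcont : Continuous fun t : ℝ => ‖y - b (t • y)‖ ^ 2 := by
    have := hb.continuous; fun_prop
  calc action b 1 (fun t => t • y) (fun _ => y)
      ≤ 1 / 2 * ∫ t in (0:ℝ)..1, (2 * ‖y‖ ^ 2 + 2 * (K:ℝ) ^ 2 * ‖y‖ ^ 2 * t ^ 2) := by
        unfold action
        gcongr
        exact intervalIntegral.integral_mono_on zero_le_one (hcont.intervalIntegrable 0 1)
          ((by fun_prop : Continuous fun t : ℝ =>
            2 * ‖y‖ ^ 2 + 2 * (K:ℝ) ^ 2 * ‖y‖ ^ 2 * t ^ 2).intervalIntegrable 0 1) hpt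
    _ = (1 + (K:ℝ) ^ 2 / 3) * ‖y‖ ^ 2 := by
        rw [intervalIntegral.integral_add intervalIntegrable_const
          ((continuous_pow 2).intervalIntegrable 0 1 |>.const_mul _),
          intervalIntegral.integral_const_mul (2 * (K:ℝ) ^ 2 * ‖y‖ ^ 2), integral_pow]
        norm_num
        ring

end Paths

lemma exists_pos_sq_sub_mul_div_le {A B ε : ℝ} (hA : 0 ≤ A) (hB : 0 ≤ B) (hε : 0 < ε) :
    ∃ T > 0, (A - T * B) ^ 2 / (2 * T) ≤ ε := by
  rcases hB.eq_or_lt with rfl | hB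
  · refine ⟨A ^ 2 / (2 * ε) + 1, by positivity, ?_⟩
    rw [div_le_iff₀ (by positivity)]
    field_simp
    nlinarith
  · refine ⟨(A + ε / B) / B, by positivity, ?_⟩
    rw [div_le_iff₀ (by positivity)]
    field_simp
    nlinarith [mul_pos hε hB]

section Shat

variable {n : ℕ} {b : EuclideanSpace ℝ (Fin n) → EuclideanSpace ℝ (Fin n)}
  {x₁ x₂ y x : EuclideanSpace ℝ (Fin n)} {φ dφ ψ dψ : ℝ → EuclideanSpace ℝ (Fin n)} {T τ : ℝ}

lemma l2norm_one_sq (f : ℝ → EuclideanSpace ℝ (Fin n)) :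
    L2norm 1 f ^ 2 = ∫ t in (0:ℝ)..1, ‖f t‖ ^ 2 :=
  Real.sq_sqrt (intervalIntegral.integral_nonneg zero_le_one fun _ _ => sq_nonneg _)

lemma ssc_eq_shat_add (hb : Continuous b) (h : IsH1Path 1 φ dφ) (hT : T ≠ 0) :
    Ssc b T φ dφ
      = Shat b φ dφ + (L2norm 1 dφ - T * L2norm 1 (fun s => b (φ s))) ^ 2 / (2 * T) := by
  have hexp := integral_norm_smul_sub_sq T⁻¹ h.1 (h.memLp_comp hb zero_le_one)
  simp only [← intervalIntegral.integral_of_le zero_le_one] at hexp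
  rw [Ssc, Shat, hexp, ← l2norm_one_sq, ← l2norm_one_sq]
  field_simp
  ring

lemma shat_le_ssc (hb : Continuous b) (h : IsH1Path 1 φ dφ) (hT : 0 < T) :
    Shat b φ dφ ≤ Ssc b T φ dφ := by
  rw [ssc_eq_shat_add hb h hT.ne']
  exact le_add_of_nonneg_right (by positivity)

lemma Adm.exists_adm_one_shat_le_action (hb : Continuous b) (hT : 0 < T)
    (h : Adm T x₁ x₂ φ dφ) :
    ∃ φ' dφ', Adm 1 x₁ x₂ φ' dφ' ∧ Shat b φ' dφ' ≤ action b T φ dφ := by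
  have h₁ : Adm 1 x₁ x₂ (fun s => φ (T * s)) (fun s => T • dφ (T * s)) :=
    Adm.comp_mul hT zero_le_one (by rwa [mul_one])
  exact ⟨_, _, h₁, (shat_le_ssc hb h₁.1 hT).trans_eq (ssc_comp_mul hT.ne')⟩

lemma bddBelow_probIISet : BddBelow (probIISet b x₁ x₂) := by
  refine ⟨0, ?_⟩
  rintro _ ⟨T, hT, φ, dφ, -, rfl⟩
  exact mul_nonneg (by norm_num) (intervalIntegral.integral_nonneg hT.le fun _ _ => sq_nonneg _)

lemma sInf_probIISet_le_shat (hb : Continuous b) (h : Adm 1 x₁ x₂ φ dφ) :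
    sInf (probIISet b x₁ x₂) ≤ Shat b φ dφ := by
  -- not `T = T̂(φ̄)`: it is `0` when `φ̄' = 0` or `b(φ̄) = 0` in `L²`, where no optimal `T` exists
  refine le_of_forall_pos_le_add fun ε hε => ?_
  obtain ⟨T, hT, hTε⟩ :=
    exists_pos_sq_sub_mul_div_le (Real.sqrt_nonneg _) (Real.sqrt_nonneg _) hε
  have hT' : Adm (T⁻¹ * T) x₁ x₂ φ dφ := by rwa [inv_mul_cancel₀ hT.ne']
  calc sInf (probIISet b x₁ x₂)
      ≤ action b T (fun t => φ (T⁻¹ * t)) (fun t => T⁻¹ • dφ (T⁻¹ * t)) :=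
        csInf_le bddBelow_probIISet ⟨T, hT, _, _, hT'.comp_mul (inv_pos.2 hT) hT.le, rfl⟩
    _ = Ssc b T φ dφ := action_comp_inv_mul hT.ne'
    _ ≤ Shat b φ dφ + ε := by
        rw [ssc_eq_shat_add hb h.1 hT.ne']
        exact add_le_add le_rfl hTε

lemma bddBelow_shatSet (hb : Continuous b) : BddBelow (shatSet b x₁ x₂) := by
  refine ⟨sInf (probIISet b x₁ x₂), ?_⟩
  rintro _ ⟨φ, dφ, h, rfl⟩
  exact sInf_probIISet_le_shat hb h

lemma sInf_shatSet_eq_sInf_probIISet (hb : Continuous b) :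
    sInf (shatSet b x₁ x₂) = sInf (probIISet b x₁ x₂) := by
  have hlift : ∀ v ∈ probIISet b x₁ x₂, ∃ w ∈ shatSet b x₁ x₂, w ≤ v := by
    rintro _ ⟨T, hT, φ, dφ, h, rfl⟩
    obtain ⟨φ', dφ', h', hle⟩ := h.exists_adm_one_shat_le_action hb hT
    exact ⟨_, ⟨φ', dφ', h', rfl⟩, hle⟩
  rcases (probIISet b x₁ x₂).eq_empty_or_nonempty with hV | hV
  · have hS : shatSet b x₁ x₂ = ∅ := eq_empty_of_forall_notMem fun _ ⟨φ, dφ, h, _⟩ =>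
      hV.subset (⟨1, one_pos, φ, dφ, h, rfl⟩ : action b 1 φ dφ ∈ probIISet b x₁ x₂)
    rw [hV, hS]
  refine le_antisymm (le_csInf hV fun v hv => ?_) (le_csInf ?_ ?_)
  · obtain ⟨w, hw, hwv⟩ := hlift v hv
    exact (csInf_le (bddBelow_shatSet hb) hw).trans hwv
  · obtain ⟨v, hv⟩ := hV
    obtain ⟨w, hw, -⟩ := hlift v hv
    exact ⟨w, hw⟩
  · rintro _ ⟨φ, dφ, h, rfl⟩
    exact sInf_probIISet_le_shat hb h

lemma Adm.exists_adm_one_shat_le_linear_append {K : NNReal} (hb : LipschitzWith K b)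
    (hb0 : b 0 = 0) (hT : 0 < T) (h : Adm T y x φ dφ) :
    ∃ φ' dφ', Adm 1 0 x φ' dφ' ∧
      Shat b φ' dφ' ≤ action b T φ dφ + (1 + (K:ℝ) ^ 2 / 3) * ‖y‖ ^ 2 := by
  obtain ⟨φ', dφ', h', hle⟩ := ((adm_linear y).append zero_le_one hT h).exists_adm_one_shat_le_action
    hb.continuous (by linarith)
  refine ⟨φ', dφ', h', hle.trans ?_⟩
  rw [action_append hb.continuous zero_le_one hT.le (adm_linear y).1 h.1]
  linarith [action_linear_le hb hb0 y]

def constrainedShatSet (b : EuclideanSpace ℝ (Fin n) → EuclideanSpace ℝ (Fin n))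
    (x₁ x₂ : EuclideanSpace ℝ (Fin n)) (τ : ℝ) : Set ℝ :=
  {v | ∃ φ dφ, Adm 1 x₁ x₂ φ dφ ∧ That b φ dφ ≤ τ ∧ v = Shat b φ dφ}

def IsConstrainedShatMin (b : EuclideanSpace ℝ (Fin n) → EuclideanSpace ℝ (Fin n))
    (x₁ x₂ : EuclideanSpace ℝ (Fin n)) (τ : ℝ) (φ dφ : ℝ → EuclideanSpace ℝ (Fin n)) : Prop :=
  Adm 1 x₁ x₂ φ dφ ∧ That b φ dφ ≤ τ ∧ Shat b φ dφ = sInf (constrainedShatSet b x₁ x₂ τ)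

lemma IsConstrainedShatMin.shat_le (hb : Continuous b)
    (h : IsConstrainedShatMin b x₁ x₂ τ φ dφ) (hψ : Adm 1 x₁ x₂ ψ dψ) (hτ : That b ψ dψ ≤ τ) :
    Shat b φ dφ ≤ Shat b ψ dψ := by
  rw [h.2.2]
  have hsub : constrainedShatSet b x₁ x₂ τ ⊆ shatSet b x₁ x₂ :=
    fun _ ⟨φ, dφ, h, _, hv⟩ => ⟨φ, dφ, h, hv⟩
  exact csInf_le ((bddBelow_shatSet hb).mono hsub) ⟨ψ, dψ, hψ, hτ, rfl⟩

lemma exists_isConstrainedShatMin_le_action_add {K : NNReal} (hb : LipschitzWith K b)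
    (hb0 : b 0 = 0) {φbar dbar : ℕ → ℝ → EuclideanSpace ℝ (Fin n)}
    (hmin : ∀ m : ℕ, 1 ≤ m → IsConstrainedShatMin b 0 x m (φbar m) (dbar m))
    (hT : 0 < T) (h : Adm T y x φ dφ) :
    ∃ m : ℕ, 1 ≤ m ∧
      Shat b (φbar m) (dbar m) ≤ action b T φ dφ + (1 + (K:ℝ) ^ 2 / 3) * ‖y‖ ^ 2 := by
  obtain ⟨ψ, dψ, hψ, hle⟩ := h.exists_adm_one_shat_le_linear_append hb hb0 hT
  have hm : 1 ≤ max 1 ⌈That b ψ dψ⌉₊ := le_max_left _ _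
  refine ⟨_, hm, ((hmin _ hm).shat_le hb.continuous hψ ?_).trans hle⟩
  exact (Nat.le_ceil _).trans (by exact_mod_cast le_max_right _ _)

end Shat

lemma norm_sub_le_of_ae_norm_eq_one {E : Type*} [NormedAddCommGroup E] [NormedSpace ℝ E]
    {φ dφ : ℝ → E} {L α : ℝ}
    (hprim : ∀ α ∈ Icc (0:ℝ) L, φ α = φ 0 + ∫ s in (0:ℝ)..α, dφ s)
    (hunit : ∀ᵐ s ∂(volume.restrict (Ioc (0:ℝ) L)), ‖dφ s‖ = 1) (hα : α ∈ Icc 0 L) :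
    ‖φ α - φ 0‖ ≤ α := by
  have hunit' := ae_restrict_of_ae_restrict_of_subset (Ioc_subset_Ioc le_rfl hα.2) hunit
  rw [ae_restrict_iff' measurableSet_Ioc] at hunit'
  have hle := intervalIntegral.norm_integral_le_of_norm_le_const_ae (a := 0) (b := α) (C := 1)
    (f := dφ) (by
      filter_upwards [hunit'] with s hs hsα
      rw [uIoc_of_le hα.1] at hsα
      exact (hs hsα).le)
  rw [hprim α hα, add_sub_cancel_left]
  simpa [abs_of_nonneg hα.1] using hle

lemma tendsto_of_antitone_of_forall_le_add {u : ℕ → ℝ} {L : ℝ}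
    (hanti : ∀ m m' : ℕ, 1 ≤ m → m ≤ m' → u m' ≤ u m) (hlow : ∀ m : ℕ, 1 ≤ m → L ≤ u m)
    (hclose : ∀ ε > 0, ∃ m : ℕ, 1 ≤ m ∧ u m ≤ L + ε) : Tendsto u atTop (𝓝 L) := by
  refine tendsto_order.2 ⟨fun c hc => ?_, fun c hc => ?_⟩
  · filter_upwards [eventually_ge_atTop 1] with m hm using hc.trans_le (hlow m hm)
  · obtain ⟨m₀, hm₀, hle⟩ := hclose ((c - L) / 2) (by linarith)
    filter_upwards [eventually_ge_atTop m₀] with m hm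
    linarith [hanti m₀ m hm₀ hm]

theorem stmt19_general {n : ℕ} (b : EuclideanSpace ℝ (Fin n) → EuclideanSpace ℝ (Fin n))
    (K : NNReal) (hb : LipschitzWith K b) (hb0 : b 0 = 0)
    (x : EuclideanSpace ℝ (Fin n))
    (ρ : ℝ) (hρ : 0 < ρ)
    -- the minimal action path `φ*_{0,x}`, parametrized by arc length on `[0,L]`
    (Lg : ℝ) (hLg : 0 < Lg)
    (φg dφg : ℝ → EuclideanSpace ℝ (Fin n))
    (hACg : IntervalIntegrable dφg MeasureTheory.volume 0 Lg ∧
      ∀ α ∈ Set.Icc (0:ℝ) Lg, φg α = φg 0 + ∫ s in (0:ℝ)..α, dφg s)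
    (hg0 : φg 0 = 0)
    (hunit : ∀ᵐ α ∂(MeasureTheory.volume.restrict (Set.Ioc (0:ℝ) Lg)), ‖dφg α‖ = 1)
    -- every sub-path of `φ*_{0,x}` from an intermediate point `y = φg α` to `x` is a
    -- minimizer with finite optimal time, and has action at most `V(0,x)`
    (hsub : ∀ α ∈ Set.Ioc (0:ℝ) Lg, ∃ T : ℝ, 0 < T ∧
      ∃ φ dφ : ℝ → EuclideanSpace ℝ (Fin n), Adm T (φg α) x φ dφ ∧
        action b T φ dφ = sInf (probIISet b (φg α) x) ∧
        action b T φ dφ ≤ sInf (probIISet b (0 : EuclideanSpace ℝ (Fin n)) x))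
    -- `φ̄^{*,m}` attains the constrained infimum over `{φ̄ ∈ A₁ : T̂(φ̄) ≤ m}`
    (φbar dbar : ℕ → ℝ → EuclideanSpace ℝ (Fin n))
    (hbar : ∀ m : ℕ, 1 ≤ m →
      Adm 1 (0 : EuclideanSpace ℝ (Fin n)) x (φbar m) (dbar m) ∧
      That b (φbar m) (dbar m) ≤ m ∧
      Shat b (φbar m) (dbar m)
        = sInf {v | ∃ φ dφ, Adm 1 (0 : EuclideanSpace ℝ (Fin n)) x φ dφ ∧
            That b φ dφ ≤ m ∧ v = Shat b φ dφ}) :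
    -- (a) the sequence of constrained minima is nonincreasing
    (∀ m m' : ℕ, 1 ≤ m → m ≤ m' →
      Shat b (φbar m') (dbar m') ≤ Shat b (φbar m) (dbar m)) ∧
    -- (b) the bound `Ŝ(φ̄^{*,n}) ≤ V(0,x) + C(K) ρ_k²` with `ρ_k = 2⁻ᵏρ`, `C(K)=1+K²/3`
    (∀ k : ℕ, ∃ m : ℕ, 1 ≤ m ∧
      Shat b (φbar m) (dbar m)
        ≤ sInf (probIISet b (0 : EuclideanSpace ℝ (Fin n)) x)
          + (1 + (K:ℝ)^2 / 3) * (ρ / 2^k)^2) ∧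
    -- (c) `{φ̄^{*,n}}` is a minimizing sequence and `inf_{A₁} Ŝ = V(0,x)`
    Tendsto (fun m => Shat b (φbar m) (dbar m)) atTop
      (𝓝 (sInf (shatSet b (0 : EuclideanSpace ℝ (Fin n)) x))) ∧
    sInf (shatSet b (0 : EuclideanSpace ℝ (Fin n)) x)
      = sInf (probIISet b (0 : EuclideanSpace ℝ (Fin n)) x) := by
  have hmin : ∀ m : ℕ, 1 ≤ m → IsConstrainedShatMin b 0 x m (φbar m) (dbar m) := hbar
  have hanti : ∀ m m' : ℕ, 1 ≤ m → m ≤ m' →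
      Shat b (φbar m') (dbar m') ≤ Shat b (φbar m) (dbar m) := fun m m' hm hmm' =>
    (hmin m' (hm.trans hmm')).shat_le hb.continuous (hmin m hm).1
      ((hmin m hm).2.1.trans (by exact_mod_cast hmm'))
  have hbound : ∀ k : ℕ, ∃ m : ℕ, 1 ≤ m ∧ Shat b (φbar m) (dbar m)
      ≤ sInf (probIISet b 0 x) + (1 + (K:ℝ) ^ 2 / 3) * (ρ / 2 ^ k) ^ 2 := by
    intro k
    have hα : min (ρ / 2 ^ k) Lg ∈ Ioc 0 Lg := ⟨lt_min (by positivity) hLg, min_le_right _ _⟩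
    obtain ⟨T, hT, ψ, dψ, hψ, -, hψV⟩ := hsub _ hα
    obtain ⟨m, hm, hle⟩ := exists_isConstrainedShatMin_le_action_add hb hb0 hmin hT hψ
    have hy : ‖φg (min (ρ / 2 ^ k) Lg)‖ ≤ ρ / 2 ^ k := by
      simpa [hg0] using (norm_sub_le_of_ae_norm_eq_one hACg.2 hunit
        (Ioc_subset_Icc_self hα)).trans (min_le_left _ _)
    exact ⟨m, hm, hle.trans (by gcongr)⟩
  have hV := sInf_shatSet_eq_sInf_probIISet (b := b) (x₁ := 0) (x₂ := x) hb.continuous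
  have hsmall : Tendsto (fun k : ℕ => (1 + (K:ℝ) ^ 2 / 3) * (ρ / 2 ^ k) ^ 2) atTop (𝓝 0) := by
    simpa using ((tendsto_const_nhds (x := ρ)).div_atTop
      (tendsto_pow_atTop_atTop_of_one_lt one_lt_two) |>.pow 2).const_mul (1 + (K:ℝ) ^ 2 / 3)
  refine ⟨hanti, hbound, hV ▸ tendsto_of_antitone_of_forall_le_add hanti
    (fun m hm => sInf_probIISet_le_shat hb.continuous (hmin m hm).1) fun ε hε => ?_, hV⟩
  obtain ⟨k, hk⟩ := (hsmall.eventually_lt_const hε).exists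
  obtain ⟨m, hm, hle⟩ := hbound k
  exact ⟨m, hm, hle.trans (by linarith)⟩

/-- Lemma 3.7: minimizing sequence for `Ŝ` via constrained problems.
With `0` an equilibrium of the `K`-Lipschitz field `b`, `x ≠ 0`, a minimal action path
`φ*_{0,x}` of finite length `L` attaining `V(0,x)` (parametrized by arc length), whose
sub-paths from any intermediate point `y` to `x` are minimizers with finite optimal time
and action at most `V(0,x)`, the minimizers `φ̄^{*,n}` of the constrained problems
`inf{Ŝ(φ̄) : φ̄ ∈ A₁, T̂(φ̄) ≤ n}` form a nonincreasing minimizing sequence: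
`Ŝ(φ̄^{*,n}) ≤ V(0,x) + C(K)ρ_k²` for suitable `n`, and
`lim_n Ŝ(φ̄^{*,n}) = inf_{A₁} Ŝ = V(0,x)`. -/
theorem stmt19 {n : ℕ} (b : EuclideanSpace ℝ (Fin n) → EuclideanSpace ℝ (Fin n))
    (K : NNReal) (hb : LipschitzWith K b) (hb0 : b 0 = 0)
    (x : EuclideanSpace ℝ (Fin n)) (hx : x ≠ 0)
    (ρ : ℝ) (hρ : 0 < ρ) (hρx : ρ ≤ ‖x‖)
    -- the minimal action path `φ*_{0,x}`, parametrized by arc length on `[0,L]`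
    (Lg : ℝ) (hLg : 0 < Lg)
    (φg dφg : ℝ → EuclideanSpace ℝ (Fin n))
    (hACg : IntervalIntegrable dφg MeasureTheory.volume 0 Lg ∧
      ∀ α ∈ Set.Icc (0:ℝ) Lg, φg α = φg 0 + ∫ s in (0:ℝ)..α, dφg s)
    (hg0 : φg 0 = 0) (hgL : φg Lg = x)
    (hunit : ∀ᵐ α ∂(MeasureTheory.volume.restrict (Set.Ioc (0:ℝ) Lg)), ‖dφg α‖ = 1)
    -- `φ*_{0,x}` attains the quasi-potential `V(0,x)` (as a geometric action)
    (hattain : (∫ α in (0:ℝ)..Lg, (‖dφg α‖ * ‖b (φg α)‖ - ⟪dφg α, b (φg α)⟫))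
      = sInf (probIISet b (0 : EuclideanSpace ℝ (Fin n)) x))
    -- every sub-path of `φ*_{0,x}` from an intermediate point `y = φg α` to `x` is a
    -- minimizer with finite optimal time, and has action at most `V(0,x)`
    (hsub : ∀ α ∈ Set.Ioc (0:ℝ) Lg, ∃ T : ℝ, 0 < T ∧
      ∃ φ dφ : ℝ → EuclideanSpace ℝ (Fin n), Adm T (φg α) x φ dφ ∧
        action b T φ dφ = sInf (probIISet b (φg α) x) ∧
        action b T φ dφ ≤ sInf (probIISet b (0 : EuclideanSpace ℝ (Fin n)) x))
    -- `φ̄^{*,m}` attains the constrained infimum over `{φ̄ ∈ A₁ : T̂(φ̄) ≤ m}`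
    (φbar dbar : ℕ → ℝ → EuclideanSpace ℝ (Fin n))
    (hbar : ∀ m : ℕ, 1 ≤ m →
      Adm 1 (0 : EuclideanSpace ℝ (Fin n)) x (φbar m) (dbar m) ∧
      That b (φbar m) (dbar m) ≤ m ∧
      Shat b (φbar m) (dbar m)
        = sInf {v | ∃ φ dφ, Adm 1 (0 : EuclideanSpace ℝ (Fin n)) x φ dφ ∧
            That b φ dφ ≤ m ∧ v = Shat b φ dφ}) :
    -- (a) the sequence of constrained minima is nonincreasing
    (∀ m m' : ℕ, 1 ≤ m → m ≤ m' →
      Shat b (φbar m') (dbar m') ≤ Shat b (φbar m) (dbar m)) ∧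
    -- (b) the bound `Ŝ(φ̄^{*,n}) ≤ V(0,x) + C(K) ρ_k²` with `ρ_k = 2⁻ᵏρ`, `C(K)=1+K²/3`
    (∀ k : ℕ, ∃ m : ℕ, 1 ≤ m ∧
      Shat b (φbar m) (dbar m)
        ≤ sInf (probIISet b (0 : EuclideanSpace ℝ (Fin n)) x)
          + (1 + (K:ℝ)^2 / 3) * (ρ / 2^k)^2) ∧
    -- (c) `{φ̄^{*,n}}` is a minimizing sequence and `inf_{A₁} Ŝ = V(0,x)`
    Tendsto (fun m => Shat b (φbar m) (dbar m)) atTop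
      (𝓝 (sInf (shatSet b (0 : EuclideanSpace ℝ (Fin n)) x))) ∧
    sInf (shatSet b (0 : EuclideanSpace ℝ (Fin n)) x)
      = sInf (probIISet b (0 : EuclideanSpace ℝ (Fin n)) x) :=
  stmt19_general b K hb hb0 x ρ hρ Lg hLg φg dφg hACg hg0 hunit hsub φbar dbar hbar
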